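/- Suppose L_F and L_R are Lipschitz moduli of F and R on Ω_θ and β > L_F + L_R. Let z̄ = (W̄, b̄₁, b̄₂, V̄) ∈ Z with O(z̄) < θ and z̄ ∉ Ω₁, and define z̃ = (W̄, b̄₁, b̄₂, Ṽ) with ṽₙ = (W̄xₙ + b̄₁)₊ for all n. Then ∑_{n=1}^N eᵀ(ṽₙ − v̄ₙ) < 0, the segment z̄ + t(z̃ − z̄) lies in Z for all t ∈ [0,1], and there exists t₁ ∈ (0,1] such that for all t ∈ (0, t₁): O(z̄ + t(z̃ − z̄)) − O(z̄) ≤ t(β − (L_F + L_R))∑_{n=1}^N eᵀ(ṽₙ − v̄ₙ) < 0. -/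

import Mathlib

open scoped BigOperators

noncomputable section

/-- A point `z = (W, b₁, b₂, V)`. -/
abbrev Pt (N N₀ N₁ : ℕ) : Type :=
  Matrix (Fin N₁) (Fin N₀) ℝ × (Fin N₁ → ℝ) × (Fin N₀ → ℝ) × Matrix (Fin N₁) (Fin N) ℝ

/-- ReLU: positive part. -/
def relu (y : ℝ) : ℝ := max y 0

variable {N N₀ N₁ : ℕ}

/-- squared Euclidean norm of a point `z = (W,b₁,b₂,V)`. -/
def sqnormPt (z : Pt N N₀ N₁) : ℝ :=
  (∑ i, ∑ j, (z.1 i j) ^ 2) + (∑ i, (z.2.1 i) ^ 2) + (∑ j, (z.2.2.1 j) ^ 2)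
    + (∑ i, ∑ n, (z.2.2.2 i n) ^ 2)

/-- Euclidean norm of a point. -/
def normPt (z : Pt N N₀ N₁) : ℝ := Real.sqrt (sqnormPt z)

/-- Euclidean distance between points. -/
def distPt (z z' : Pt N N₀ N₁) : ℝ := normPt (z - z')

/-- `(W xₙ + b₁)ᵢ`. -/
def preact (X : Matrix (Fin N₀) (Fin N) ℝ) (z : Pt N N₀ N₁) (i : Fin N₁) (n : Fin N) : ℝ :=
  (∑ j, z.1 i j * X j n) + z.2.1 i

/-- `(Wᵀ vₙ + b₂)ⱼ`. -/
def outPre (z : Pt N N₀ N₁) (j : Fin N₀) (n : Fin N) : ℝ :=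
  (∑ i, z.1 i j * z.2.2.2 i n) + z.2.2.1 j

/-- fidelity term `F(z)`. -/
def Fv (X : Matrix (Fin N₀) (Fin N) ℝ) (z : Pt N N₀ N₁) : ℝ :=
  (1 / (N : ℝ)) * ∑ n, ∑ j, (relu (outPre z j n) - X j n) ^ 2

/-- regularization term `R(z)`. -/
def Rv (lam₁ lam₂ : ℝ) (z : Pt N N₀ N₁) : ℝ :=
  lam₁ * (∑ n, ∑ i, z.2.2.2 i n) + lam₂ * ∑ i, ∑ j, (z.1 i j) ^ 2

/-- penalty term `P(z)`. -/
def Pv (β : ℝ) (X : Matrix (Fin N₀) (Fin N) ℝ) (z : Pt N N₀ N₁) : ℝ :=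
  β * ∑ n, ∑ i, (z.2.2.2 i n - relu (preact X z i n))

/-- objective `O(z) = F(z) + R(z) + P(z)`. -/
def Ov (lam₁ lam₂ β : ℝ) (X : Matrix (Fin N₀) (Fin N) ℝ) (z : Pt N N₀ N₁) : ℝ :=
  Fv X z + Rv lam₁ lam₂ z + Pv β X z

/-- `Ω₁ = {z : vₙ = (Wxₙ + b₁)₊}`. -/
def Omega1 (X : Matrix (Fin N₀) (Fin N) ℝ) : Set (Pt N N₀ N₁) :=
  {z | ∀ i n, z.2.2.2 i n = relu (preact X z i n)}

/-- `Ω₂ = {z : vₙ ≥ (Wxₙ + b₁)₊}`. -/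
def Omega2 (X : Matrix (Fin N₀) (Fin N) ℝ) : Set (Pt N N₀ N₁) :=
  {z | ∀ i n, relu (preact X z i n) ≤ z.2.2.2 i n}

/-- level set `Ω_θ = {z ∈ Ω₂ : O(z) ≤ θ}` (also used for `Ω_δ`). -/
def OmegaLev (lam₁ lam₂ β θ : ℝ) (X : Matrix (Fin N₀) (Fin N) ℝ) : Set (Pt N N₀ N₁) :=
  {z | z ∈ Omega2 X ∧ Ov lam₁ lam₂ β X z ≤ θ}

/-- `‖X‖₁`: maximum absolute column sum. -/
def Xcol1 (X : Matrix (Fin N₀) (Fin N) ℝ) : ℝ := ⨆ n, ∑ j, |X j n|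

/-- the constant `α`. -/
def alphaC (N N₀ N₁ : ℕ) (lam₁ lam₂ θ : ℝ) (X : Matrix (Fin N₀) (Fin N) ℝ) : ℝ :=
  max (θ / lam₁ + Real.sqrt ((N₁ : ℝ) * (N₀ : ℝ) * θ / lam₂) * Xcol1 X)
      (θ * Real.sqrt ((N₁ : ℝ) * (N₀ : ℝ) * θ) / (lam₁ * Real.sqrt lam₂)
        + Real.sqrt ((N : ℝ) * θ) + Xcol1 X)

/-- `Ω₃ = {z : ‖b₁‖_∞ ≤ α, ‖b₂‖_∞ ≤ α}`. -/
def Omega3 (lam₁ lam₂ θ : ℝ) (X : Matrix (Fin N₀) (Fin N) ℝ) : Set (Pt N N₀ N₁) :=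
  {z | (∀ i, |z.2.1 i| ≤ alphaC N N₀ N₁ lam₁ lam₂ θ X) ∧
       (∀ j, |z.2.2.1 j| ≤ alphaC N N₀ N₁ lam₁ lam₂ θ X)}

/-- `Z = Ω₂ ∩ Ω₃`. -/
def Zset (lam₁ lam₂ θ : ℝ) (X : Matrix (Fin N₀) (Fin N) ℝ) : Set (Pt N N₀ N₁) :=
  Omega2 X ∩ Omega3 lam₁ lam₂ θ X

/-- tangent cone of `C` at `zb`. -/
def TangentCone (C : Set (Pt N N₀ N₁)) (zb : Pt N N₀ N₁) : Set (Pt N N₀ N₁) :=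
  {d | ∃ zs : ℕ → Pt N N₀ N₁, ∃ ts : ℕ → ℝ,
      (∀ k, zs k ∈ C) ∧ (∀ k, 0 < ts k) ∧
      Filter.Tendsto ts Filter.atTop (nhds 0) ∧
      Filter.Tendsto (fun k => distPt (zs k) zb) Filter.atTop (nhds 0) ∧
      Filter.Tendsto (fun k => normPt ((ts k)⁻¹ • (zs k - zb) - d)) Filter.atTop (nhds 0)}

/-- `zb` is a d-stationary point of `f` over `C`:
`liminf_{t↓0} (f(zb + t d) - f(zb))/t ≥ 0` for every tangent direction `d`. -/
def DStationary (f : Pt N N₀ N₁ → ℝ) (C : Set (Pt N N₀ N₁)) (zb : Pt N N₀ N₁) : Prop :=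
  zb ∈ C ∧ ∀ d ∈ TangentCone C zb, ∀ ε : ℝ, 0 < ε → ∃ δ : ℝ, 0 < δ ∧
    ∀ t : ℝ, 0 < t → t < δ → -ε < (f (zb + t • d) - f zb) / t

/-- smoothing function `s_μ` of the ReLU. -/
def smoothRelu (μ y : ℝ) : ℝ :=
  if y < 0 then 0 else if y ≤ μ then y ^ 2 / (2 * μ) else y - μ / 2

/-- smoothed fidelity term `F̃(z, μ)`. -/
def Ftil (X : Matrix (Fin N₀) (Fin N) ℝ) (z : Pt N N₀ N₁) (μ : ℝ) : ℝ :=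
  (1 / (N : ℝ)) * (∑ n, ∑ j, (relu (outPre z j n)) ^ 2)
    + (1 / (N : ℝ)) * (∑ j, ∑ n, (X j n) ^ 2)
    - (2 / (N : ℝ)) * ∑ n, ∑ j, X j n * smoothRelu μ (outPre z j n)

/-- smoothed penalty term `P̃(z, μ)`. -/
def Ptil (β : ℝ) (X : Matrix (Fin N₀) (Fin N) ℝ) (z : Pt N N₀ N₁) (μ : ℝ) : ℝ :=
  β * ∑ n, ∑ i, (z.2.2.2 i n - smoothRelu μ (preact X z i n))

/-- smoothed objective `Õ(z, μ)`. -/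
def Otil (lam₁ lam₂ β : ℝ) (X : Matrix (Fin N₀) (Fin N) ℝ) (z : Pt N N₀ N₁) (μ : ℝ) : ℝ :=
  Ftil X z μ + Ptil β X z μ + Rv lam₁ lam₂ z

/-!
Replacing `V` by `Ṽ = (W xₙ + b₁)₊` leaves `W, b₁, b₂` and hence every pre-activation unchanged, so
the segment from `z̄` to `z̃` stays in `Z`, and along it the penalty decreases linearly:
`P(z̄ + t(z̃ - z̄)) - P(z̄) = t β S` with `S = ∑ₙ eᵀ(ṽₙ - v̄ₙ) < 0`. The direction `z̃ - z̄` has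
nonpositive entries only, so its Euclidean norm is at most its `ℓ¹` norm `-S`. By continuity of `O`
the segment stays in `Ω_θ` for small `t`, where the Lipschitz bounds let `F + R` grow by at most
`t (L_F + L_R) (-S)`, which the penalty decrease outweighs since `β > L_F + L_R`.
-/

open Finset

section DoubleSums

variable {ι κ : Type*} [Fintype ι] [Fintype κ]

lemma sum_sum_neg {f : ι → κ → ℝ} (h : ∀ i j, f i j ≤ 0) (h' : ∃ i j, f i j < 0) :
    ∑ i, ∑ j, f i j < 0 := by
  obtain ⟨i, j, hij⟩ := h'
  rw [← Fintype.sum_prod_type']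
  exact sum_neg' (fun p _ => h p.1 p.2) ⟨(i, j), mem_univ _, hij⟩

lemma sqrt_sum_sum_sq_le_sum_sum_abs (f : ι → κ → ℝ) :
    √(∑ i, ∑ j, f i j ^ 2) ≤ ∑ i, ∑ j, |f i j| := by
  simp only [← Fintype.sum_prod_type' (fun i j => f i j ^ 2),
    ← Fintype.sum_prod_type' (fun i j => |f i j|)]
  rw [Real.sqrt_le_left (sum_nonneg fun _ _ => abs_nonneg _)]
  calc ∑ p : ι × κ, f p.1 p.2 ^ 2 = ∑ p : ι × κ, |f p.1 p.2| ^ 2 := by simp only [sq_abs]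
    _ ≤ _ := sum_sq_le_sq_sum_of_nonneg fun _ _ => abs_nonneg _

end DoubleSums

variable (X : Matrix (Fin N₀) (Fin N) ℝ)

lemma sqnormPt_smul (t : ℝ) (z : Pt N N₀ N₁) : sqnormPt (t • z) = t ^ 2 * sqnormPt z := by
  simp only [sqnormPt, Prod.smul_fst, Prod.smul_snd, Matrix.smul_apply, Pi.smul_apply,
    smul_eq_mul, mul_pow, ← mul_sum]
  ring

lemma distPt_add_smul_self (z d : Pt N N₀ N₁) {t : ℝ} (ht : 0 ≤ t) :
    distPt (z + t • d) z = t * normPt d := by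
  rw [distPt, add_sub_cancel_left, normPt, normPt, sqnormPt_smul, Real.sqrt_mul (sq_nonneg t),
    Real.sqrt_sq ht]

lemma continuous_Ov (lam₁ lam₂ β : ℝ) : Continuous (Ov (N₁ := N₁) lam₁ lam₂ β X) := by
  unfold Ov Fv Rv Pv relu preact outPre
  fun_prop

/-- The point `z̃`: the `V`-block of `z` reset onto `Ω₁`. -/
def projOmega1 (z : Pt N N₀ N₁) : Pt N N₀ N₁ :=
  (z.1, z.2.1, z.2.2.1, Matrix.of fun i n => relu (preact X z i n))

section Segment

variable (z : Pt N N₀ N₁) (t : ℝ)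

@[simp] lemma segment_fst : (z + t • (projOmega1 X z - z)).1 = z.1 := by simp [projOmega1]

@[simp] lemma segment_b₁ : (z + t • (projOmega1 X z - z)).2.1 = z.2.1 := by simp [projOmega1]

@[simp] lemma segment_b₂ : (z + t • (projOmega1 X z - z)).2.2.1 = z.2.2.1 := by
  simp [projOmega1]

lemma segment_V_apply (i : Fin N₁) (n : Fin N) :
    (z + t • (projOmega1 X z - z)).2.2.2 i n
      = z.2.2.2 i n + t * (relu (preact X z i n) - z.2.2.2 i n) := by
  simp [projOmega1]

@[simp] lemma preact_segment : preact X (z + t • (projOmega1 X z - z)) = preact X z := by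
  ext i n
  simp only [preact, segment_fst, segment_b₁]

lemma Pv_eq_neg_mul_sum (β : ℝ) :
    Pv β X z = -β * ∑ n, ∑ i, ((projOmega1 X z).2.2.2 i n - z.2.2.2 i n) := by
  simp only [Pv, projOmega1, Matrix.of_apply, mul_sum, neg_mul, ← mul_neg, neg_sub]

lemma Pv_segment (β : ℝ) : Pv β X (z + t • (projOmega1 X z - z)) = (1 - t) * Pv β X z := by
  simp only [Pv, preact_segment, segment_V_apply, mul_sum]
  exact sum_congr rfl fun _ _ => sum_congr rfl fun _ _ => by ring

variable {X z}

lemma segment_mem_Zset {lam₁ lam₂ θ : ℝ} (hz : z ∈ Zset lam₁ lam₂ θ X) (ht : t ≤ 1) :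
    z + t • (projOmega1 X z - z) ∈ Zset lam₁ lam₂ θ X := by
  obtain ⟨hz₂, hb₁, hb₂⟩ := hz
  refine ⟨fun i n => ?_, by rw [segment_b₁]; exact hb₁, by rw [segment_b₂]; exact hb₂⟩
  rw [preact_segment, segment_V_apply]
  nlinarith [hz₂ i n]

lemma sum_projOmega1_sub_neg (hz₂ : z ∈ Omega2 X) (hz₁ : z ∉ Omega1 X) :
    ∑ n, ∑ i, ((projOmega1 X z).2.2.2 i n - z.2.2.2 i n) < 0 := by
  obtain ⟨i, n, hne⟩ : ∃ i n, z.2.2.2 i n ≠ relu (preact X z i n) := by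
    simpa [Omega1] using hz₁
  exact sum_sum_neg (fun n i => sub_nonpos.2 (hz₂ i n))
    ⟨n, i, sub_neg.2 (lt_of_le_of_ne (hz₂ i n) (Ne.symm hne))⟩

lemma normPt_projOmega1_sub_le (hz₂ : z ∈ Omega2 X) :
    normPt (projOmega1 X z - z) ≤ -∑ n, ∑ i, ((projOmega1 X z).2.2.2 i n - z.2.2.2 i n) := by
  calc normPt (projOmega1 X z - z)
      = √(∑ i, ∑ n, (relu (preact X z i n) - z.2.2.2 i n) ^ 2) := by
        simp [normPt, sqnormPt, projOmega1]
    _ ≤ ∑ i, ∑ n, |relu (preact X z i n) - z.2.2.2 i n| := sqrt_sum_sum_sq_le_sum_sum_abs _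
    _ = _ := by
        rw [sum_comm, ← sum_neg_distrib]
        refine sum_congr rfl fun n _ => ?_
        rw [← sum_neg_distrib]
        exact sum_congr rfl fun i _ => abs_of_nonpos (sub_nonpos.2 (hz₂ i n))

lemma Ov_segment_sub_le {lam₁ lam₂ β LF LR : ℝ} (hLF : 0 ≤ LF) (hLR : 0 ≤ LR)
    (hz₂ : z ∈ Omega2 X) (ht : 0 ≤ t)
    (hF : |Fv X (z + t • (projOmega1 X z - z)) - Fv X z|
      ≤ LF * distPt (z + t • (projOmega1 X z - z)) z)
    (hR : |Rv lam₁ lam₂ (z + t • (projOmega1 X z - z)) - Rv lam₁ lam₂ z|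
      ≤ LR * distPt (z + t • (projOmega1 X z - z)) z) :
    Ov lam₁ lam₂ β X (z + t • (projOmega1 X z - z)) - Ov lam₁ lam₂ β X z
      ≤ t * (β - (LF + LR)) * ∑ n, ∑ i, ((projOmega1 X z).2.2.2 i n - z.2.2.2 i n) := by
  set S := ∑ n, ∑ i, ((projOmega1 X z).2.2.2 i n - z.2.2.2 i n)
  have hdist : distPt (z + t • (projOmega1 X z - z)) z ≤ t * -S := by
    rw [distPt_add_smul_self _ _ ht]
    exact mul_le_mul_of_nonneg_left (normPt_projOmega1_sub_le hz₂) ht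
  have hP : Pv β X (z + t • (projOmega1 X z - z)) - Pv β X z = t * β * S := by
    rw [Pv_segment, Pv_eq_neg_mul_sum X z β]
    ring
  have hF' := (le_abs_self _).trans (hF.trans (mul_le_mul_of_nonneg_left hdist hLF))
  have hR' := (le_abs_self _).trans (hR.trans (mul_le_mul_of_nonneg_left hdist hLR))
  simp only [Ov]
  linarith

end Segment

theorem stmt13_general (N N₀ N₁ : ℕ)
    (lam₁ lam₂ β θ : ℝ)
    (X : Matrix (Fin N₀) (Fin N) ℝ)
    (LF LR : ℝ) (hLF : 0 ≤ LF) (hLR : 0 ≤ LR)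
    (hLipF : ∀ z : Pt N N₀ N₁, z ∈ OmegaLev lam₁ lam₂ β θ X →
      ∀ z' : Pt N N₀ N₁, z' ∈ OmegaLev lam₁ lam₂ β θ X →
        |Fv X z - Fv X z'| ≤ LF * distPt z z')
    (hLipR : ∀ z : Pt N N₀ N₁, z ∈ OmegaLev lam₁ lam₂ β θ X →
      ∀ z' : Pt N N₀ N₁, z' ∈ OmegaLev lam₁ lam₂ β θ X →
        |Rv lam₁ lam₂ z - Rv lam₁ lam₂ z'| ≤ LR * distPt z z')
    (hpen : LF + LR < β)
    (zb : Pt N N₀ N₁) (hzbZ : zb ∈ Zset lam₁ lam₂ θ X)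
    (hzbO : Ov lam₁ lam₂ β X zb < θ) (hzbn : zb ∉ Omega1 X)
    (zt : Pt N N₀ N₁)
    (hzt : zt = (zb.1, zb.2.1, zb.2.2.1, Matrix.of fun i n => relu (preact X zb i n))) :
    (∑ n, ∑ i, (zt.2.2.2 i n - zb.2.2.2 i n)) < 0 ∧
    (∀ t : ℝ, 0 ≤ t → t ≤ 1 → zb + t • (zt - zb) ∈ Zset lam₁ lam₂ θ X) ∧
    (∃ t₁ : ℝ, 0 < t₁ ∧ t₁ ≤ 1 ∧ ∀ t : ℝ, 0 < t → t < t₁ →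
      Ov lam₁ lam₂ β X (zb + t • (zt - zb)) - Ov lam₁ lam₂ β X zb
        ≤ t * (β - (LF + LR)) * (∑ n, ∑ i, (zt.2.2.2 i n - zb.2.2.2 i n)) ∧
      t * (β - (LF + LR)) * (∑ n, ∑ i, (zt.2.2.2 i n - zb.2.2.2 i n)) < 0) := by
  obtain rfl : zt = projOmega1 X zb := hzt
  have hS := sum_projOmega1_sub_neg hzbZ.1 hzbn
  have hzb : zb ∈ OmegaLev lam₁ lam₂ β θ X := ⟨hzbZ.1, hzbO.le⟩
  have hnear : ∀ᶠ t in nhds (0 : ℝ), Ov lam₁ lam₂ β X (zb + t • (projOmega1 X zb - zb)) < θ :=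
    ((continuous_Ov X _ _ _).comp (by fun_prop)).continuousAt.eventually_lt continuousAt_const
      (by simpa using hzbO)
  obtain ⟨l, u, ⟨hl, hu⟩, hsub⟩ := hnear.exists_Ioo_subset
  refine ⟨hS, fun t _ => segment_mem_Zset t hzbZ, min u 1, lt_min hu one_pos, min_le_right _ _,
    fun t ht htu => ⟨?_, mul_neg_of_pos_of_neg (mul_pos ht (by linarith)) hS⟩⟩
  have hzt : zb + t • (projOmega1 X zb - zb) ∈ OmegaLev lam₁ lam₂ β θ X :=
    ⟨(segment_mem_Zset t hzbZ (htu.trans_le (min_le_right _ _)).le).1,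
      (hsub ⟨hl.trans ht, htu.trans_le (min_le_left _ _)⟩).le⟩
  exact Ov_segment_sub_le t hLF hLR hzbZ.1 ht.le (hLipF _ hzt _ hzb) (hLipR _ hzt _ hzb)

theorem stmt13 (N N₀ N₁ : ℕ) (hN : 0 < N) (hN₀ : 0 < N₀) (hN₁ : 0 < N₁)
    (lam₁ lam₂ β θ : ℝ) (hlam₁ : 0 < lam₁) (hlam₂ : 0 < lam₂) (hbeta : 0 < β)
    (X : Matrix (Fin N₀) (Fin N) ℝ)
    (hθ : (1 / (N : ℝ)) * ∑ j, ∑ n, (X j n) ^ 2 < θ)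
    (LF LR : ℝ) (hLF : 0 ≤ LF) (hLR : 0 ≤ LR)
    (hLipF : ∀ z : Pt N N₀ N₁, z ∈ OmegaLev lam₁ lam₂ β θ X →
      ∀ z' : Pt N N₀ N₁, z' ∈ OmegaLev lam₁ lam₂ β θ X →
        |Fv X z - Fv X z'| ≤ LF * distPt z z')
    (hLipR : ∀ z : Pt N N₀ N₁, z ∈ OmegaLev lam₁ lam₂ β θ X →
      ∀ z' : Pt N N₀ N₁, z' ∈ OmegaLev lam₁ lam₂ β θ X →
        |Rv lam₁ lam₂ z - Rv lam₁ lam₂ z'| ≤ LR * distPt z z')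
    (hpen : LF + LR < β)
    (zb : Pt N N₀ N₁) (hzbZ : zb ∈ Zset lam₁ lam₂ θ X)
    (hzbO : Ov lam₁ lam₂ β X zb < θ) (hzbn : zb ∉ Omega1 X)
    (zt : Pt N N₀ N₁)
    (hzt : zt = (zb.1, zb.2.1, zb.2.2.1, Matrix.of fun i n => relu (preact X zb i n))) :
    (∑ n, ∑ i, (zt.2.2.2 i n - zb.2.2.2 i n)) < 0 ∧
    (∀ t : ℝ, 0 ≤ t → t ≤ 1 → zb + t • (zt - zb) ∈ Zset lam₁ lam₂ θ X) ∧
    (∃ t₁ : ℝ, 0 < t₁ ∧ t₁ ≤ 1 ∧ ∀ t : ℝ, 0 < t → t < t₁ →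
      Ov lam₁ lam₂ β X (zb + t • (zt - zb)) - Ov lam₁ lam₂ β X zb
        ≤ t * (β - (LF + LR)) * (∑ n, ∑ i, (zt.2.2.2 i n - zb.2.2.2 i n)) ∧
      t * (β - (LF + LR)) * (∑ n, ∑ i, (zt.2.2.2 i n - zb.2.2.2 i n)) < 0) :=
  stmt13_general N N₀ N₁ lam₁ lam₂ β θ X LF LR hLF hLR hLipF hLipR hpen zb hzbZ hzbO hzbn zt hzt
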